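/- arXiv:1307.4901 — 3 statements merged into one kernel-verified Lean document; each statement's English description precedes it below -/
import Mathlib

section
/- For every fan F, there exists a homomorphism c : F → T₇ such that c(r(F)) = 0, c(fl(F)) ≠ 0, and c(ll(F)) ≠ 0. -/
/-- `T₇` is the tournament on `ZMod 7` with an arc from `i` to `j`
iff `j - i ≡ 1, 2` or `4 (mod 7)`. -/
def T7 (i j : ZMod 7) : Prop := j - i = 1 ∨ j - i = 2 ∨ j - i = 4

/-- `isAncestor parent v u` means that `u` is a descendant of `v` in the rooted tree
described by the parent function `parent` (i.e. `v` is reached from `u` by iterating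
`parent`). -/
def isAncestor {n : ℕ} (parent : Fin n → Fin n) (v u : Fin n) : Prop :=
  ∃ k : ℕ, parent^[k] u = v

/-- A fan: a rooted tree (given by a parent function on `Fin n`, rooted at `root`,
every vertex reaching the root) whose edges are oriented arbitrarily
(`treeDir v` orients the edge between `v` and its parent), together with an enumeration
`leaf : Fin m → Fin n` of its leaves (the childless non-root vertices) compatible with
a planar embedding (the leaves descending from any vertex form a contiguous interval
of the enumeration), and, for every pair of consecutive leaves, one arc joining them
(oriented by `pathDir`). -/
structure Fan where
  /-- number of vertices; the vertex set is `Fin n` -/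
  n : ℕ
  /-- the root of the tree -/
  root : Fin n
  /-- the parent function of the rooted tree -/
  parent : Fin n → Fin n
  parent_root : parent root = root
  parent_ne : ∀ v, v ≠ root → parent v ≠ v
  reaches_root : ∀ v, ∃ k : ℕ, parent^[k] v = root
  /-- orientation of the tree edge between `v` and `parent v` (for `v ≠ root`):
  `true` means the arc goes from `parent v` to `v` -/
  treeDir : Fin n → Bool
  /-- number of leaves -/
  m : ℕ
  m_pos : 0 < m
  /-- the enumeration `x₁, …, x_m` of the leaves -/
  leaf : Fin m → Fin n
  leaf_inj : Function.Injective leaf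
  /-- the leaves are exactly the childless non-root vertices -/
  leaf_iff : ∀ v : Fin n, (∃ i, leaf i = v) ↔ (v ≠ root ∧ ∀ u, parent u = v → u = v)
  /-- planarity: the leaves descending from any vertex form a contiguous interval -/
  contiguous : ∀ v : Fin n, ∀ i j k : Fin m, i ≤ j → j ≤ k →
    isAncestor parent v (leaf i) → isAncestor parent v (leaf k) →
      isAncestor parent v (leaf j)
  /-- orientation of the arc between consecutive leaves `x_i` and `x_{i+1}`:
  `true` means the arc goes from `x_i` to `x_{i+1}` -/
  pathDir : Fin m → Bool

/-- the first leaf `fl(F) = x₁` -/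
def Fan.fl (F : Fan) : Fin F.n := F.leaf ⟨0, F.m_pos⟩

/-- the last leaf `ll(F) = x_m` -/
def Fan.ll (F : Fan) : Fin F.n := F.leaf ⟨F.m - 1, Nat.sub_lt F.m_pos Nat.one_pos⟩

/-- the arcs of a fan: the (oriented) tree edges together with the (oriented) arcs
joining consecutive leaves -/
def Fan.arc (F : Fan) (u v : Fin F.n) : Prop :=
  (v ≠ F.root ∧ u = F.parent v ∧ F.treeDir v = true) ∨
  (u ≠ F.root ∧ v = F.parent u ∧ F.treeDir u = false) ∨
  (∃ i : Fin F.m, ∃ h : i.val + 1 < F.m,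
    (F.pathDir i = true ∧ u = F.leaf i ∧ v = F.leaf ⟨i.val + 1, h⟩) ∨
    (F.pathDir i = false ∧ v = F.leaf i ∧ u = F.leaf ⟨i.val + 1, h⟩))

namespace FanAux
open Classical
variable (F : Fan)

/-- descendant relation -/
def Dsc (v u : Fin F.n) : Prop := isAncestor F.parent v u

variable {F}

lemma dsc_refl (v : Fin F.n) : Dsc F v v := ⟨0, rfl⟩

lemma dsc_trans {v w u : Fin F.n} (h1 : Dsc F v w) (h2 : Dsc F w u) : Dsc F v u := by
  obtain ⟨k, hk⟩ := h1; obtain ⟨l, hl⟩ := h2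
  exact ⟨k + l, by rw [Function.iterate_add_apply, hl, hk]⟩

lemma dsc_of_parent {c v : Fin F.n} (h : F.parent c = v) : Dsc F v c := ⟨1, by simpa using h⟩

noncomputable def dep (v : Fin F.n) : ℕ := Nat.find (F.reaches_root v)

lemma dep_spec (v : Fin F.n) : F.parent^[dep v] v = F.root := Nat.find_spec (F.reaches_root v)

lemma dep_le {v : Fin F.n} {k : ℕ} (h : F.parent^[k] v = F.root) : dep v ≤ k :=
  Nat.find_le h

lemma dep_root : dep (F := F) F.root = 0 :=
  Nat.le_zero.mp (dep_le (by simp))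

lemma eq_root_of_dep_zero {v : Fin F.n} (h : dep v = 0) : v = F.root := by
  have := dep_spec v; rwa [h, Function.iterate_zero_apply] at this

lemma dep_parent {v : Fin F.n} (hv : v ≠ F.root) : dep (F.parent v) + 1 = dep v := by
  have h1 : dep (F.parent v) ≤ dep v - 1 := by
    have hd : dep v ≠ 0 := fun h => hv (eq_root_of_dep_zero h)
    apply dep_le
    have : F.parent^[dep v - 1] (F.parent v) = F.parent^[dep v] v := by
      rw [← Function.iterate_succ_apply]
      congr 1; omega
    rw [this]; exact dep_spec v
  have h2 : dep v ≤ dep (F.parent v) + 1 := by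
    apply dep_le
    rw [Function.iterate_succ_apply]; exact dep_spec (F.parent v)
  have hd : dep v ≠ 0 := fun h => hv (eq_root_of_dep_zero h)
  omega

lemma dep_iterate {v : Fin F.n} : ∀ k, k ≤ dep v → dep (F.parent^[k] v) + k = dep v := by
  intro k; induction k with
  | zero => simp
  | succ k ih =>
    intro hk
    have hk' : k ≤ dep v := by omega
    have hne : F.parent^[k] v ≠ F.root := by
      intro h; have := dep_le h; omega
    have := dep_parent hne
    rw [Function.iterate_succ_apply']
    have := ih hk'
    omega

lemma dsc_canonical {v u : Fin F.n} (h : Dsc F v u) :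
    dep v ≤ dep u ∧ F.parent^[dep u - dep v] u = v := by
  obtain ⟨k, hk⟩ := h
  by_cases hle : k ≤ dep u
  · have := dep_iterate k hle
    rw [hk] at this
    constructor
    · omega
    · have : dep u - dep v = k := by omega
      rw [this, hk]
  · have : F.parent^[k] u = F.root := by
      have hsplit : k = (k - dep u) + dep u := by omega
      rw [hsplit, Function.iterate_add_apply, dep_spec]
      exact Function.iterate_fixed F.parent_root _
    rw [hk] at this
    subst this
    rw [dep_root]
    refine ⟨Nat.zero_le _, ?_⟩
    simpa using dep_spec u

lemma dsc_dep_le {v u : Fin F.n} (h : Dsc F v u) : dep v ≤ dep u := (dsc_canonical h).1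

lemma dsc_eq_of_dep_eq {v u : Fin F.n} (h : Dsc F v u) (hd : dep v = dep u) : u = v := by
  have := (dsc_canonical h).2
  rwa [← hd, Nat.sub_self, Function.iterate_zero_apply] at this

lemma dsc_parent_of_ne {c u : Fin F.n} (h : Dsc F c u) (hne : u ≠ c) : Dsc F c (F.parent u) := by
  obtain ⟨hle, hcan⟩ := dsc_canonical h
  have hk : dep u - dep c ≠ 0 := by
    intro h0
    rw [h0, Function.iterate_zero_apply] at hcan
    exact hne hcan
  refine ⟨dep u - dep c - 1, ?_⟩
  rw [← Function.iterate_succ_apply F.parent (dep u - dep c - 1) u]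
  have he : dep u - dep c - 1 + 1 = dep u - dep c := by omega
  simp only [Nat.succ_eq_add_one]
  rw [he, hcan]

lemma child_ne_root {c v : Fin F.n} (hp : F.parent c = v) (hne : c ≠ v) : c ≠ F.root := by
  intro h; apply hne; rw [h, F.parent_root] at hp; rw [h]; exact hp

lemma dep_child {c v : Fin F.n} (hp : F.parent c = v) (hne : c ≠ v) : dep c = dep v + 1 := by
  have := dep_parent (child_ne_root hp hne)
  rw [hp] at this; omega

lemma not_dsc_child {c v : Fin F.n} (hp : F.parent c = v) (hne : c ≠ v) : ¬ Dsc F c v := by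
  intro h
  have := dsc_dep_le h
  have := dep_child hp hne
  omega

/-- childless vertex -/
def Childless (u : Fin F.n) : Prop := ∀ w, F.parent w = u → w = u

lemma dsc_childless {u : Fin F.n} (hu : Childless u) {w : Fin F.n} (h : Dsc F u w) : w = u := by
  obtain ⟨k, hk⟩ := h
  induction k generalizing w with
  | zero => exact hk
  | succ k ih =>
    rw [Function.iterate_succ_apply] at hk
    exact hu w (ih hk)

lemma leaf_ne_root (i : Fin F.m) : F.leaf i ≠ F.root := ((F.leaf_iff _).mp ⟨i, rfl⟩).1

lemma leaf_childless (i : Fin F.m) : Childless (F := F) (F.leaf i) :=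
  ((F.leaf_iff _).mp ⟨i, rfl⟩).2

lemma dsc_leaf_eq {i : Fin F.m} {w : Fin F.n} (h : Dsc F (F.leaf i) w) : w = F.leaf i :=
  dsc_childless (leaf_childless i) h

lemma dep_lt_n (v : Fin F.n) : dep v < F.n := by
  have hinj : Function.Injective (fun j : Fin (dep v + 1) => F.parent^[(j : ℕ)] v) := by
    intro j j' hjj
    have h1 := dep_iterate (F := F) (v := v) j (by omega)
    have h2 := dep_iterate (F := F) (v := v) j' (by omega)
    simp only at hjj
    rw [hjj] at h1
    have : (j : ℕ) = (j' : ℕ) := by omega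
    exact Fin.ext this
  have := Fintype.card_le_of_injective _ hinj
  simpa using this

lemma root_has_child : ∃ c, F.parent c = F.root ∧ c ≠ F.root := by
  set x := F.leaf ⟨0, F.m_pos⟩ with hx
  have hxr : x ≠ F.root := leaf_ne_root _
  have hd : dep x ≠ 0 := fun h => hxr (eq_root_of_dep_zero h)
  refine ⟨F.parent^[dep x - 1] x, ?_, ?_⟩
  · rw [← Function.iterate_succ_apply' F.parent (dep x - 1) x]
    have he : dep x - 1 + 1 = dep x := by omega
    simp only [Nat.succ_eq_add_one]
    rw [he]; exact dep_spec x
  · intro h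
    have := dep_iterate (F := F) (v := x) (dep x - 1) (by omega)
    rw [h, dep_root] at this
    omega

lemma exists_child {v u : Fin F.n} (h : Dsc F v u) (hne : u ≠ v) :
    ∃ c, F.parent c = v ∧ c ≠ v ∧ Dsc F c u := by
  obtain ⟨hle, hcan⟩ := dsc_canonical h
  have hlt : dep v < dep u := by
    rcases Nat.lt_or_ge (dep v) (dep u) with h' | h'
    · exact h'
    · exact absurd (dsc_eq_of_dep_eq h (by omega)) hne
  set k := dep u - dep v with hk
  have hk1 : 1 ≤ k := by omega
  refine ⟨F.parent^[k - 1] u, ?_, ?_, ⟨k - 1, rfl⟩⟩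
  · rw [← Function.iterate_succ_apply' F.parent (k - 1) u]
    have he : k - 1 + 1 = k := by omega
    simp only [Nat.succ_eq_add_one]
    rw [he, hcan]
  · intro hcv
    have := dep_iterate (F := F) (v := u) (k - 1) (by omega)
    rw [hcv] at this
    omega

lemma child_unique {v c₁ c₂ u : Fin F.n} (hp1 : F.parent c₁ = v) (hn1 : c₁ ≠ v)
    (hp2 : F.parent c₂ = v) (hn2 : c₂ ≠ v) (h1 : Dsc F c₁ u) (h2 : Dsc F c₂ u) : c₁ = c₂ := by
  have e1 := dep_child hp1 hn1
  have e2 := dep_child hp2 hn2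
  have c1 := dsc_canonical h1
  have c2 := dsc_canonical h2
  rw [← c1.2, ← c2.2, e1, e2]

lemma exists_leaf_under : ∀ (N : ℕ) (v : Fin F.n), F.n - dep v ≤ N → ∃ i, Dsc F v (F.leaf i) := by
  intro N
  induction N with
  | zero => intro v h; have := dep_lt_n v; omega
  | succ N ih =>
    intro v h
    by_cases hc : Childless (F := F) v
    · by_cases hr : v = F.root
      · obtain ⟨c, hp, hne⟩ := root_has_child (F := F)
        exact absurd (hc c (hr ▸ hp)) (hr ▸ hne)
      · obtain ⟨i, hi⟩ := (F.leaf_iff v).mpr ⟨hr, hc⟩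
        exact ⟨i, hi ▸ dsc_refl v⟩
    · simp only [Childless, not_forall] at hc
      obtain ⟨c, hp, hne⟩ := hc
      have hd := dep_child hp hne
      have := dep_lt_n v
      obtain ⟨i, hi⟩ := ih c (by omega)
      exact ⟨i, dsc_trans (dsc_of_parent hp) hi⟩


noncomputable def LU (v : Fin F.n) : Finset (Fin F.m) :=
  Finset.univ.filter (fun i => Dsc F v (F.leaf i))

lemma mem_LU {v : Fin F.n} {i : Fin F.m} : i ∈ LU v ↔ Dsc F v (F.leaf i) := by
  simp [LU]

lemma LU_nonempty (v : Fin F.n) : (LU (F := F) v).Nonempty := by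
  obtain ⟨i, hi⟩ := exists_leaf_under (F.n - dep v) v le_rfl
  exact ⟨i, mem_LU.mpr hi⟩

noncomputable def lov (v : Fin F.n) : Fin F.m := (LU v).min' (LU_nonempty v)
noncomputable def hiv (v : Fin F.n) : Fin F.m := (LU v).max' (LU_nonempty v)

lemma lov_mem (v : Fin F.n) : lov (F := F) v ∈ LU v := (LU v).min'_mem _
lemma hiv_mem (v : Fin F.n) : hiv (F := F) v ∈ LU v := (LU v).max'_mem _
lemma lov_le {v : Fin F.n} {i : Fin F.m} (h : i ∈ LU v) : lov v ≤ i := (LU v).min'_le _ h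
lemma le_hiv {v : Fin F.n} {i : Fin F.m} (h : i ∈ LU v) : i ≤ hiv v := (LU v).le_max' _ h

lemma interval_mem {v : Fin F.n} {j : Fin F.m} (h1 : lov v ≤ j) (h2 : j ≤ hiv v) :
    j ∈ LU (F := F) v :=
  mem_LU.mpr (F.contiguous v (lov v) j (hiv v) h1 h2 (mem_LU.mp (lov_mem v))
    (mem_LU.mp (hiv_mem v)))

lemma LU_subset {v c : Fin F.n} (h : Dsc F v c) : LU c ⊆ LU (F := F) v := by
  intro i hi
  exact mem_LU.mpr (dsc_trans h (mem_LU.mp hi))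

lemma lov_in_LU_of_dsc {v c : Fin F.n} (h : Dsc F v c) : lov c ∈ LU (F := F) v :=
  LU_subset h (lov_mem c)

lemma LU_leaf (j : Fin F.m) : LU (F := F) (F.leaf j) = {j} := by
  apply Finset.eq_singleton_iff_unique_mem.mpr
  constructor
  · exact mem_LU.mpr (dsc_refl _)
  · intro i hi
    exact F.leaf_inj (dsc_leaf_eq (mem_LU.mp hi))

lemma lov_leaf (j : Fin F.m) : lov (F := F) (F.leaf j) = j := by
  have := lov_mem (F := F) (F.leaf j)
  rw [LU_leaf] at this
  simpa using this

lemma hiv_leaf (j : Fin F.m) : hiv (F := F) (F.leaf j) = j := by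
  have := hiv_mem (F := F) (F.leaf j)
  rw [LU_leaf] at this
  simpa using this

lemma child_LU_disjoint {v c₁ c₂ : Fin F.n} (hp1 : F.parent c₁ = v) (hn1 : c₁ ≠ v)
    (hp2 : F.parent c₂ = v) (hn2 : c₂ ≠ v) {i : Fin F.m}
    (h1 : i ∈ LU c₁) (h2 : i ∈ LU c₂) : c₁ = c₂ :=
  child_unique hp1 hn1 hp2 hn2 (mem_LU.mp h1) (mem_LU.mp h2)

lemma v_not_leaf {v c : Fin F.n} (hp : F.parent c = v) (hne : c ≠ v) (j : Fin F.m) :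
    F.leaf j ≠ v := by
  intro h
  exact hne ((leaf_childless j c (h.symm ▸ hp)).trans h)

lemma no_self_arc (w : Fin F.n) : ¬ F.arc w w := by
  intro h
  rcases h with ⟨hr, hp, _⟩ | ⟨hr, hp, _⟩ | ⟨i, hlt, h | h⟩
  · exact F.parent_ne w hr hp.symm
  · exact F.parent_ne w hr hp.symm
  · have := F.leaf_inj (h.2.1.symm.trans h.2.2)
    have := Fin.val_eq_of_eq this
    simp at this
  · have := F.leaf_inj (h.2.1.symm.trans h.2.2)
    have := Fin.val_eq_of_eq this
    simp at this

lemma not_dsc_parent {v : Fin F.n} (hv : v ≠ F.root) : ¬ Dsc F v (F.parent v) := by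
  intro h
  have h1 := dsc_dep_le h
  have h2 := dep_parent hv
  have h3 : dep v ≠ 0 := fun h0 => hv (eq_root_of_dep_zero h0)
  omega

end FanAux

instance T7.dec : ∀ a b, Decidable (T7 a b) := fun a b => by unfold T7; infer_instance

def Tdir : Bool → ZMod 7 → ZMod 7 → Prop
  | true, a, x => T7 a x
  | false, a, x => T7 x a

instance Tdir.dec : ∀ d a x, Decidable (Tdir d a x) := fun d a x => by
  cases d <;> simp only [Tdir] <;> infer_instance

def QS : Finset (ZMod 7) := {1, 2, 4}

set_option maxRecDepth 10000 in
lemma core1 : ∀ (d : Bool) (uu vv : ZMod 7), uu ≠ 0 → vv ≠ 0 →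
    ∃ uu' vv' : ZMod 7, uu' ≠ 0 ∧ vv' ≠ 0 ∧ ∀ q₃ ∈ QS, ∃ s ∈ QS, ∃ q ∈ QS,
      uu' * q₃ = (cond d s (-s)) + uu * q ∧ vv' * q₃ = (cond d s (-s)) + vv * q := by
  decide

set_option maxRecDepth 10000 in
lemma core2 : ∀ (e : Bool) (vv₁ uu₂ vv₂ : ZMod 7), vv₁ ≠ 0 → uu₂ ≠ 0 → vv₂ ≠ 0 →
    ∃ vv₃ : ZMod 7, vv₃ ≠ 0 ∧ ∀ q₃ ∈ QS, ∃ q' ∈ QS,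
      Tdir e (vv₁ * q₃) (uu₂ * q') ∧ vv₂ * q' = vv₃ * q₃ := by
  decide

lemma T7_shift (b x y : ZMod 7) : T7 (b + x) (b + y) ↔ T7 x y := by
  have h : b + y - (b + x) = y - x := by ring
  unfold T7
  rw [h]

lemma T7_right {a q : ZMod 7} (hq : q ∈ QS) : T7 a (a + q) := by
  have h : a + q - a = q := by ring
  have hq' : q = 1 ∨ q = 2 ∨ q = 4 := by simpa [QS] using hq
  unfold T7
  rw [h]
  exact hq'

lemma T7_left {a q : ZMod 7} (hq : q ∈ QS) : T7 (a + -q) a := by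
  have h : a - (a + -q) = q := by ring
  have hq' : q = 1 ∨ q = 2 ∨ q = 4 := by simpa [QS] using hq
  unfold T7
  rw [h]
  exact hq'

namespace FanAux
variable {F : Fan}

variable (F) in
def InR (v : Fin F.n) (p : Fin F.m) (w : Fin F.n) : Prop := Dsc F v w ∧ lov w ≤ p

variable (F) in
def OKR (v : Fin F.n) (p : Fin F.m) (h : Fin F.n → ZMod 7) : Prop :=
  ∀ u w, F.arc u w → InR F v p u → InR F v p w → T7 (h u) (h w)

variable (F) in
def CS (v : Fin F.n) (p : Fin F.m) : Prop :=
  ∃ uu vv : ZMod 7, uu ≠ 0 ∧ vv ≠ 0 ∧ ∀ b : ZMod 7, ∀ q ∈ QS, ∃ h : Fin F.n → ZMod 7,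
    h v = b ∧ OKR F v p h ∧ h (F.leaf (lov v)) = b + uu * q ∧ h (F.leaf p) = b + vv * q

variable (F) in
def DS (v : Fin F.n) (p : Fin F.m) : Prop :=
  ∃ uu vv : ZMod 7, uu ≠ 0 ∧ vv ≠ 0 ∧ ∀ a : ZMod 7, ∀ q ∈ QS, ∃ h : Fin F.n → ZMod 7,
    Tdir (F.treeDir v) a (h v) ∧ OKR F v p h ∧
    h (F.leaf (lov v)) = a + uu * q ∧ h (F.leaf p) = a + vv * q

theorem main : ∀ (K : ℕ) (v : Fin F.n) (p : Fin F.m),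
    (F.n - dep v) * F.m + (p : ℕ) < K → p ∈ LU (F := F) v →
    DS F v p ∧ ((∃ c, F.parent c = v ∧ c ≠ v) → CS F v p) := by
  intro K
  induction K with
  | zero => intro v p h _; omega
  | succ K ih =>
    intro v p hK hp
    classical
    have hC : (∃ c, F.parent c = v ∧ c ≠ v) → CS F v p := by
      rintro ⟨c₀, hp₀, hn₀⟩
      have hvleafp : Dsc F v (F.leaf p) := mem_LU.mp hp
      have hlpv : F.leaf p ≠ v := v_not_leaf hp₀ hn₀ p
      obtain ⟨c, hpc, hnc, hdc⟩ := exists_child hvleafp hlpv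
      have hndcv : ¬ Dsc F c v := not_dsc_child hpc hnc
      have hpLUc : p ∈ LU (F := F) c := mem_LU.mpr hdc
      have hlovc : lov (F := F) v ≤ lov (F := F) c :=
        lov_le (lov_in_LU_of_dsc (dsc_of_parent hpc))
      have hlcp : lov (F := F) c ≤ p := lov_le hpLUc
      have hphic : p ≤ hiv (F := F) c := le_hiv hpLUc
      have hdepc := dep_child hpc hnc
      have hdeplt := dep_lt_n v
      have hmes : (F.n - dep c) * F.m + (p : ℕ) < K := by
        have hpm := p.isLt
        have h2 : (F.n - dep v - 1) * F.m + F.m = (F.n - dep v) * F.m := by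
          have h3 : F.n - dep v - 1 + 1 = F.n - dep v := by omega
          calc (F.n - dep v - 1) * F.m + F.m = (F.n - dep v - 1 + 1) * F.m := by ring
          _ = (F.n - dep v) * F.m := by rw [h3]
        have h4 : F.n - dep c = F.n - dep v - 1 := by omega
        rw [h4]
        omega
      have claim1 : ∀ w : Fin F.n, InR F v p w →
          w = v ∨ Dsc F c w ∨ (hiv (F := F) w : ℕ) < (lov (F := F) c : ℕ) := by
        intro w hw
        by_cases hwv : w = v
        · exact Or.inl hwv
        by_cases hcw : Dsc F c w
        · exact Or.inr (Or.inl hcw)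
        right; right
        obtain ⟨c', hpc', hnc', hdc'⟩ := exists_child hw.1 hwv
        have hne : c' ≠ c := fun h => hcw (h ▸ hdc')
        have h1 : lov (F := F) c' ≤ lov (F := F) w := lov_le (LU_subset hdc' (lov_mem w))
        have h2 : (lov (F := F) c' : ℕ) ≤ (p : ℕ) := le_trans (Fin.le_def.mp h1) (Fin.le_def.mp hw.2)
        by_cases hll : (lov (F := F) c : ℕ) ≤ (lov (F := F) c' : ℕ)
        · exfalso
          have hmem : lov (F := F) c' ∈ LU (F := F) c := by
            apply interval_mem (Fin.le_def.mpr hll)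
            exact Fin.le_def.mpr (le_trans h2 (Fin.le_def.mp hphic))
          exact hne (child_LU_disjoint hpc' hnc' hpc hnc (lov_mem c') hmem)
        · by_cases hhc : (lov (F := F) c : ℕ) ≤ (hiv (F := F) c' : ℕ)
          · exfalso
            have hmem : lov (F := F) c ∈ LU (F := F) c' := by
              apply interval_mem (Fin.le_def.mpr (by omega)) (Fin.le_def.mpr hhc)
            exact hne.symm (child_LU_disjoint hpc hnc hpc' hnc' (lov_mem c) hmem)
          · have h3 : hiv (F := F) w ≤ hiv (F := F) c' := le_hiv (LU_subset hdc' (hiv_mem w))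
            have h4 := Fin.le_def.mp h3
            omega
      by_cases hfirst : lov (F := F) c = lov (F := F) v
      · -- first child case
        obtain ⟨uu, vv, huu, hvv, hD⟩ := (ih c p hmes hpLUc).1
        refine ⟨uu, vv, huu, hvv, ?_⟩
        intro b q hq
        obtain ⟨h₂, hTd, hOK₂, hfl₂, hll₂⟩ := hD b q hq
        have hresolve : ∀ w : Fin F.n, InR F v p w → w = v ∨ Dsc F c w := by
          intro w hw
          rcases claim1 w hw with h | h | h
          · exact Or.inl h
          · exact Or.inr h
          · exfalso
            have e1 : lov (F := F) v ≤ lov (F := F) w := lov_le (LU_subset hw.1 (lov_mem w))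
            have e2 : lov (F := F) w ≤ hiv (F := F) w := lov_le (hiv_mem w)
            have e3 := Fin.le_def.mp e1
            have e4 := Fin.le_def.mp e2
            have e5 := Fin.le_def.mp hlovc
            rw [hfirst] at h
            omega
        set hh : Fin F.n → ZMod 7 := fun w => if w = v then b else h₂ w with hhdef
        have hhv : hh v = b := by simp [hhdef]
        have hho : ∀ x, x ≠ v → hh x = h₂ x := by
          intro x hx
          simp only [hhdef]
          exact if_neg hx
        refine ⟨hh, hhv, ?_, ?_, ?_⟩
        · intro u w harc hu hw
          rcases hresolve u hu with huv | hdu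
          · rcases hresolve w hw with hwv | hdw
            · rw [huv, hwv] at harc
              exact absurd harc (no_self_arc v)
            · have hwnv : w ≠ v := fun h => hndcv (h ▸ hdw)
              rw [huv, hhv, hho w hwnv]
              rcases harc with ⟨hwr, hupw, hdir⟩ | ⟨hur, hwpu, hdir⟩ | ⟨i, hilt, hcs⟩
              · have hpwv : F.parent w = v := by rw [← hupw, huv]
                have hwc : w = c := child_unique hpwv hwnv hpc hnc (dsc_refl w) hdw
                rw [hwc] at hdir ⊢
                rw [hdir] at hTd
                exact hTd
              · exfalso
                rw [huv] at hur hwpu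
                rw [hwpu] at hw
                exact not_dsc_parent hur hw.1
              · exfalso
                rcases hcs with ⟨_, hui, _⟩ | ⟨_, _, hui⟩
                · exact v_not_leaf hpc hnc i (hui.symm.trans huv)
                · exact v_not_leaf hpc hnc _ (hui.symm.trans huv)
          · have hunv : u ≠ v := fun h => hndcv (h ▸ hdu)
            rcases hresolve w hw with hwv | hdw
            · rw [hwv, hhv, hho u hunv]
              rcases harc with ⟨hwr, hupw, hdir⟩ | ⟨hur, hwpu, hdir⟩ | ⟨i, hilt, hcs⟩
              · exfalso
                rw [hwv] at hwr hupw
                rw [hupw] at hu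
                exact not_dsc_parent hwr hu.1
              · have hpuv : F.parent u = v := by rw [← hwpu, hwv]
                have huc : u = c := child_unique hpuv hunv hpc hnc (dsc_refl u) hdu
                rw [huc] at hdir ⊢
                rw [hdir] at hTd
                exact hTd
              · exfalso
                rcases hcs with ⟨_, _, hwi⟩ | ⟨_, hwi, _⟩
                · exact v_not_leaf hpc hnc _ (hwi.symm.trans hwv)
                · exact v_not_leaf hpc hnc i (hwi.symm.trans hwv)
            · have hwnv : w ≠ v := fun h => hndcv (h ▸ hdw)
              rw [hho u hunv, hho w hwnv]
              exact hOK₂ u w harc ⟨hdu, hu.2⟩ ⟨hdw, hw.2⟩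
        · rw [hho _ (v_not_leaf hpc hnc _), ← hfirst]
          exact hfl₂
        · rw [hho _ hlpv]
          exact hll₂
      · -- later child case
        have hlt : (lov (F := F) v : ℕ) < (lov (F := F) c : ℕ) := by
          have := Fin.le_def.mp hlovc
          rcases Nat.lt_or_ge (lov (F := F) v : ℕ) (lov (F := F) c : ℕ) with h | h
          · exact h
          · exact absurd (Fin.ext (by omega) : lov (F := F) c = lov (F := F) v) hfirst
        set p' : Fin F.m := ⟨(lov (F := F) c : ℕ) - 1, by omega⟩ with hp'def
        have hp'val : (p' : ℕ) = (lov (F := F) c : ℕ) - 1 := rfl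
        have hp'p : (p' : ℕ) < (p : ℕ) := by
          have := Fin.le_def.mp hlcp
          omega
        have hp'LU : p' ∈ LU (F := F) v := by
          apply interval_mem
          · exact Fin.le_def.mpr (by rw [hp'val]; omega)
          · exact Fin.le_def.mpr (le_trans (le_of_lt hp'p) (Fin.le_def.mp (le_hiv hp)))
        have hmes' : (F.n - dep v) * F.m + (p' : ℕ) < K := by
          set X := (F.n - dep v) * F.m
          omega
        obtain ⟨uu₁, vv₁, huu₁, hvv₁, hC₁⟩ := (ih v p' hmes' hp'LU).2 ⟨c, hpc, hnc⟩
        obtain ⟨uu₂, vv₂, huu₂, hvv₂, hD₂⟩ := (ih c p hmes hpLUc).1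
        obtain ⟨vv₃, hvv₃, hcore⟩ := core2 (F.pathDir p') vv₁ uu₂ vv₂ hvv₁ huu₂ hvv₂
        refine ⟨uu₁, vv₃, huu₁, hvv₃, ?_⟩
        intro b q₃ hq₃
        obtain ⟨q', hq', harc', heq'⟩ := hcore q₃ hq₃
        obtain ⟨h₁, hv₁, hOK₁, hfl₁, hll₁⟩ := hC₁ b q₃ hq₃
        obtain ⟨h₂, hTd₂, hOK₂, hfl₂, hll₂⟩ := hD₂ b q' hq'
        have hside : ∀ w : Fin F.n, InR F v p w → ¬ Dsc F c w → InR F v p' w := by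
          intro w hw hcw
          rcases claim1 w hw with hwv | h | h
          · refine ⟨hwv ▸ dsc_refl v, Fin.le_def.mpr ?_⟩
            rw [hwv, hp'val]
            omega
          · exact absurd h hcw
          · refine ⟨hw.1, Fin.le_def.mpr ?_⟩
            have e2 : lov (F := F) w ≤ hiv (F := F) w := lov_le (hiv_mem w)
            have e4 := Fin.le_def.mp e2
            rw [hp'val]
            omega
        set hh : Fin F.n → ZMod 7 := fun w => if Dsc F c w then h₂ w else h₁ w with hhdef
        have hh2 : ∀ x, Dsc F c x → hh x = h₂ x := by
          intro x hx
          simp only [hhdef]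
          exact if_pos hx
        have hh1 : ∀ x, ¬ Dsc F c x → hh x = h₁ x := by
          intro x hx
          simp only [hhdef]
          exact if_neg hx
        refine ⟨hh, ?_, ?_, ?_, ?_⟩
        · rw [hh1 v hndcv]
          exact hv₁
        · intro u w harc hu hw
          by_cases hdu : Dsc F c u <;> by_cases hdw : Dsc F c w
          · rw [hh2 u hdu, hh2 w hdw]
            exact hOK₂ u w harc ⟨hdu, hu.2⟩ ⟨hdw, hw.2⟩
          · -- u inside c, w outside
            rw [hh2 u hdu, hh1 w hdw]
            rcases harc with ⟨hwr, hupw, hdir⟩ | ⟨hur, hwpu, hdir⟩ | ⟨i, hilt, hcs⟩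
            · exact absurd (dsc_trans (hupw ▸ hdu) (dsc_of_parent rfl)) hdw
            · have huc : u = c := by
                by_contra hune
                exact hdw (hwpu ▸ dsc_parent_of_ne hdu hune)
              have hwv : w = v := by rw [hwpu, huc, hpc]
              rw [huc, hwv, hv₁]
              rw [huc] at hdir
              rw [hdir] at hTd₂
              exact hTd₂
            · rcases hcs with ⟨hpd, hui, hwi⟩ | ⟨hpd, hwi, hui⟩
              · exfalso
                have hiLU : i ∈ LU (F := F) c := mem_LU.mpr (hui ▸ hdu)
                have hi1 : (i : ℕ) + 1 ≤ (p : ℕ) := by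
                  have := Fin.le_def.mp hw.2
                  rw [hwi, lov_leaf] at this
                  exact this
                have hmem : (⟨(i : ℕ) + 1, hilt⟩ : Fin F.m) ∈ LU (F := F) c := by
                  apply interval_mem
                  · exact Fin.le_def.mpr
                      (by have := Fin.le_def.mp (lov_le hiLU); simp only []; omega)
                  · exact Fin.le_def.mpr (by have := Fin.le_def.mp hphic; simp only []; omega)
                exact hdw (hwi ▸ mem_LU.mp hmem)
              · -- arc from u = leaf (i+1) (inside c) to w = leaf i (outside)
                have hiLU : (⟨(i : ℕ) + 1, hilt⟩ : Fin F.m) ∈ LU (F := F) c :=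
                  mem_LU.mpr (hui ▸ hdu)
                have hinot : ¬ ((lov (F := F) c : ℕ) ≤ (i : ℕ) ∧
                    (i : ℕ) ≤ (hiv (F := F) c : ℕ)) := by
                  rintro ⟨ha, hb⟩
                  exact hdw (hwi ▸ mem_LU.mp
                    (interval_mem (Fin.le_def.mpr ha) (Fin.le_def.mpr hb)))
                have hia : (lov (F := F) c : ℕ) ≤ (i : ℕ) + 1 := Fin.le_def.mp (lov_le hiLU)
                have hib : (i : ℕ) + 1 ≤ (hiv (F := F) c : ℕ) := Fin.le_def.mp (le_hiv hiLU)
                have hieq : (i : ℕ) + 1 = (lov (F := F) c : ℕ) := by omega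
                have hip' : i = p' := Fin.ext (by rw [hp'val]; omega)
                have hfin : (⟨(i : ℕ) + 1, hilt⟩ : Fin F.m) = lov (F := F) c := Fin.ext hieq
                rw [hui, hwi, hfin, hip', hfl₂, hll₁, T7_shift]
                rw [hip'] at hpd
                rw [hpd] at harc'
                exact harc'
          · -- u outside, w inside c
            rw [hh1 u hdu, hh2 w hdw]
            rcases harc with ⟨hwr, hupw, hdir⟩ | ⟨hur, hwpu, hdir⟩ | ⟨i, hilt, hcs⟩
            · have hwc : w = c := by
                by_contra hwne
                exact hdu (hupw ▸ dsc_parent_of_ne hdw hwne)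
              have huv : u = v := by rw [hupw, hwc, hpc]
              rw [hwc, huv, hv₁]
              rw [hwc] at hdir
              rw [hdir] at hTd₂
              exact hTd₂
            · exact absurd (dsc_trans (hwpu ▸ hdw) (dsc_of_parent rfl)) hdu
            · rcases hcs with ⟨hpd, hui, hwi⟩ | ⟨hpd, hwi, hui⟩
              · -- arc from u = leaf i (outside) to w = leaf (i+1) (inside c)
                have hiLU : (⟨(i : ℕ) + 1, hilt⟩ : Fin F.m) ∈ LU (F := F) c :=
                  mem_LU.mpr (hwi ▸ hdw)
                have hinot : ¬ ((lov (F := F) c : ℕ) ≤ (i : ℕ) ∧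
                    (i : ℕ) ≤ (hiv (F := F) c : ℕ)) := by
                  rintro ⟨ha, hb⟩
                  exact hdu (hui ▸ mem_LU.mp
                    (interval_mem (Fin.le_def.mpr ha) (Fin.le_def.mpr hb)))
                have hia : (lov (F := F) c : ℕ) ≤ (i : ℕ) + 1 := Fin.le_def.mp (lov_le hiLU)
                have hib : (i : ℕ) + 1 ≤ (hiv (F := F) c : ℕ) := Fin.le_def.mp (le_hiv hiLU)
                have hieq : (i : ℕ) + 1 = (lov (F := F) c : ℕ) := by omega
                have hip' : i = p' := Fin.ext (by rw [hp'val]; omega)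
                have hfin : (⟨(i : ℕ) + 1, hilt⟩ : Fin F.m) = lov (F := F) c := Fin.ext hieq
                rw [hui, hwi, hfin, hip', hfl₂, hll₁, T7_shift]
                rw [hip'] at hpd
                rw [hpd] at harc'
                exact harc'
              · exfalso
                have hiLU : i ∈ LU (F := F) c := mem_LU.mpr (hwi ▸ hdw)
                have hi1 : (i : ℕ) + 1 ≤ (p : ℕ) := by
                  have := Fin.le_def.mp hu.2
                  rw [hui, lov_leaf] at this
                  exact this
                have hmem : (⟨(i : ℕ) + 1, hilt⟩ : Fin F.m) ∈ LU (F := F) c := by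
                  apply interval_mem
                  · exact Fin.le_def.mpr
                      (by have := Fin.le_def.mp (lov_le hiLU); simp only []; omega)
                  · exact Fin.le_def.mpr (by have := Fin.le_def.mp hphic; simp only []; omega)
                exact hdu (hui ▸ mem_LU.mp hmem)
          · rw [hh1 u hdu, hh1 w hdw]
            exact hOK₁ u w harc (hside u hu hdu) (hside w hw hdw)
        · have hnd : ¬ Dsc F c (F.leaf (lov (F := F) v)) := by
            intro h
            have := Fin.le_def.mp (lov_le (mem_LU.mpr h))
            omega
          rw [hh1 _ hnd]
          exact hfl₁
        · rw [hh2 _ hdc, hll₂, heq']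
    have hD : DS F v p := by
      by_cases hch : ∃ c, F.parent c = v ∧ c ≠ v
      · obtain ⟨uu, vv, huu, hvv, hCw⟩ := hC hch
        obtain ⟨uu', vv', huu', hvv', hcore⟩ := core1 (F.treeDir v) uu vv huu hvv
        refine ⟨uu', vv', huu', hvv', ?_⟩
        intro a q₃ hq₃
        obtain ⟨s, hs, q, hq, h1, h2⟩ := hcore q₃ hq₃
        obtain ⟨h, hv, hOK, hfl, hll⟩ := hCw (a + cond (F.treeDir v) s (-s)) q hq
        refine ⟨h, ?_, hOK, ?_, ?_⟩
        · rw [hv]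
          cases htd : F.treeDir v
          · exact T7_left hs
          · exact T7_right hs
        · rw [hfl, h1]; ring
        · rw [hll, h2]; ring
      · have hcl : Childless (F := F) v := by
          intro w hw
          by_contra hne
          exact hch ⟨w, hw, hne⟩
        have hOKtriv : ∀ z : ZMod 7, OKR F v p (fun _ => z) := by
          intro z u w harc hu hw
          have hu' : u = v := dsc_childless hcl hu.1
          have hw' : w = v := dsc_childless hcl hw.1
          rw [hu', hw'] at harc
          exact absurd harc (no_self_arc v)
        cases htd : F.treeDir v
        · refine ⟨-1, -1, by decide, by decide, ?_⟩
          intro a q hq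
          refine ⟨fun _ => a + -1 * q, ?_, hOKtriv _, rfl, rfl⟩
          rw [htd]
          show Tdir false a (a + -1 * q)
          show T7 (a + -1 * q) a
          have he : a + -1 * q = a + -q := by ring
          rw [he]
          exact T7_left hq
        · refine ⟨1, 1, by decide, by decide, ?_⟩
          intro a q hq
          refine ⟨fun _ => a + 1 * q, ?_, hOKtriv _, rfl, rfl⟩
          rw [htd]
          show Tdir true a (a + 1 * q)
          show T7 a (a + 1 * q)
          have he : a + 1 * q = a + q := by ring
          rw [he]
          exact T7_right hq
    exact ⟨hD, hC⟩

end FanAux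



open FanAux

/-- For every fan `F` there is a homomorphism (coloring) `c : F → T₇` such that
`c(r(F)) = 0`, `c(fl(F)) ≠ 0` and `c(ll(F)) ≠ 0`. -/
theorem fan_coloring (F : Fan) :
    ∃ c : Fin F.n → ZMod 7,
      (∀ u v, F.arc u v → T7 (c u) (c v)) ∧
      c F.root = 0 ∧ c F.fl ≠ 0 ∧ c F.ll ≠ 0 := by
  classical
  have hm1 : F.m - 1 < F.m := Nat.sub_lt F.m_pos Nat.one_pos
  set pl : Fin F.m := ⟨F.m - 1, hm1⟩ with hpl
  have hplLU : pl ∈ LU (F := F) F.root := mem_LU.mpr (F.reaches_root _)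
  obtain ⟨uu, vv, huu, hvv, hCw⟩ :=
    (main ((F.n - dep F.root) * F.m + (pl : ℕ) + 1) F.root pl (Nat.lt_succ_self _) hplLU).2
      (root_has_child (F := F))
  obtain ⟨h, hroot, hOK, hfl, hll⟩ := hCw 0 1 (by decide)
  have hlo : lov (F := F) F.root = ⟨0, F.m_pos⟩ := by
    apply le_antisymm
    · exact lov_le (mem_LU.mpr (F.reaches_root _))
    · exact Fin.le_def.mpr (Nat.zero_le _)
  refine ⟨h, ?_, hroot, ?_, ?_⟩
  · intro u w harc
    refine hOK u w harc ⟨F.reaches_root u, ?_⟩ ⟨F.reaches_root w, ?_⟩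
    · exact Fin.le_def.mpr (by have := (lov (F := F) u).isLt; simp [hpl]; omega)
    · exact Fin.le_def.mpr (by have := (lov (F := F) w).isLt; simp [hpl]; omega)
  · show h (F.leaf ⟨0, F.m_pos⟩) ≠ 0
    rw [← hlo, hfl]
    simpa using huu
  · show h (F.leaf pl) ≠ 0
    rw [hll]
    simpa using hvv
end

section
/- Every oriented Halin graph whose exterior cycle has at most 5 vertices admits an oriented coloring with at most 8 colors: the exterior vertices can each be given a distinct color (using at most 5 colors) and the interior tree can be colored with 3 additional colors. -/
/-- An oriented Halin graph: a tree with at least three leaves (given by a parent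
function on `Fin n`, rooted at an interior vertex `root`, every vertex reaching the
root), together with a cycle through its leaves in a cyclic order compatible with a
planar embedding of the tree (the leaves descending from any vertex form a contiguous
interval of the enumeration `leaf : Fin m → Fin n`, the cycle visiting the leaves in
this order), every edge being oriented arbitrarily (`treeDir` for the tree edges,
`cycDir` for the cycle edges). -/
structure OrientedHalin where
  /-- number of vertices; the vertex set is `Fin n` -/
  n : ℕ
  /-- the root of the tree -/
  root : Fin n
  /-- the parent function of the rooted tree -/
  parent : Fin n → Fin n
  parent_root : parent root = root
  parent_ne : ∀ v, v ≠ root → parent v ≠ v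
  reaches_root : ∀ v, ∃ k : ℕ, parent^[k] v = root
  /-- the root is an interior vertex of the tree: it has at least two children -/
  root_interior : ∃ u v : Fin n, u ≠ v ∧ u ≠ root ∧ v ≠ root ∧
    parent u = root ∧ parent v = root
  /-- orientation of the tree edge between `v` and `parent v` (for `v ≠ root`):
  `true` means the arc goes from `parent v` to `v` -/
  treeDir : Fin n → Bool
  /-- number of leaves -/
  m : ℕ
  /-- the tree has at least three leaves -/
  three_le : 3 ≤ m
  /-- the cyclic enumeration of the leaves (the exterior cycle) -/
  leaf : Fin m → Fin n
  leaf_inj : Function.Injective leaf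
  /-- the leaves are exactly the childless non-root vertices -/
  leaf_iff : ∀ v : Fin n, (∃ i, leaf i = v) ↔ (v ≠ root ∧ ∀ u, parent u = v → u = v)
  /-- planarity: the leaves descending from any vertex form a contiguous interval -/
  contiguous : ∀ v : Fin n, ∀ i j k : Fin m, i ≤ j → j ≤ k →
    isAncestor parent v (leaf i) → isAncestor parent v (leaf k) →
      isAncestor parent v (leaf j)
  /-- orientation of the cycle edge between `leaf i` and `leaf (i+1 mod m)`:
  `true` means the arc goes from `leaf i` to `leaf (i+1 mod m)` -/
  cycDir : Fin m → Bool

/-- the successor of a leaf index on the exterior cycle -/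
def OrientedHalin.next (H : OrientedHalin) (i : Fin H.m) : Fin H.m :=
  ⟨(i.val + 1) % H.m, Nat.mod_lt _ (Nat.lt_of_lt_of_le (by norm_num) H.three_le)⟩

/-- the arcs of an oriented Halin graph: the (oriented) tree edges together with the
(oriented) edges of the exterior cycle -/
def OrientedHalin.arc (H : OrientedHalin) (u v : Fin H.n) : Prop :=
  (v ≠ H.root ∧ u = H.parent v ∧ H.treeDir v = true) ∨
  (u ≠ H.root ∧ v = H.parent u ∧ H.treeDir u = false) ∨
  (∃ i : Fin H.m,
    (H.cycDir i = true ∧ u = H.leaf i ∧ v = H.leaf (H.next i)) ∨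
    (H.cycDir i = false ∧ v = H.leaf i ∧ u = H.leaf (H.next i)))

namespace OrientedHalin

variable (H : OrientedHalin)

lemma root_not_leaf : ¬ ∃ i, H.leaf i = H.root := by
  rintro h
  exact ((H.leaf_iff H.root).1 h).1 rfl

lemma parent_not_leaf {v : Fin H.n} (hv : v ≠ H.root) :
    ¬ ∃ i, H.leaf i = H.parent v := by
  intro h
  have h1 : v = H.parent v := ((H.leaf_iff (H.parent v)).1 h).2 v rfl
  exact H.parent_ne v hv h1.symm

/-- depth of a vertex in the rooted tree -/
noncomputable def depth (v : Fin H.n) : ℕ := Nat.find (H.reaches_root v)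

lemma depth_spec (v : Fin H.n) : H.parent^[H.depth v] v = H.root :=
  Nat.find_spec (H.reaches_root v)

lemma depth_pos {v : Fin H.n} (hv : v ≠ H.root) : 0 < H.depth v := by
  rcases Nat.eq_zero_or_pos (H.depth v) with h | h
  · have := H.depth_spec v
    rw [h] at this
    exact absurd this hv
  · exact h

lemma depth_parent {v : Fin H.n} (hv : v ≠ H.root) :
    H.depth v = H.depth (H.parent v) + 1 := by
  obtain ⟨k, hk⟩ := Nat.exists_eq_succ_of_ne_zero (Nat.pos_iff_ne_zero.mp (H.depth_pos hv))
  have h1 : H.parent^[k] (H.parent v) = H.root := by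
    have := H.depth_spec v
    rw [hk, Function.iterate_succ_apply] at this
    exact this
  have le1 : H.depth (H.parent v) ≤ k := Nat.find_le h1
  have le2 : k ≤ H.depth (H.parent v) := by
    by_contra hc
    push_neg at hc
    have h2 : H.parent^[H.depth (H.parent v) + 1] v = H.root := by
      rw [Function.iterate_succ_apply]
      exact H.depth_spec (H.parent v)
    have h3 : H.depth (H.parent v) + 1 < H.depth v := by omega
    exact Nat.find_min (H.reaches_root v) h3 h2
  omega

/-- the increment along a tree edge -/
def delta (v : Fin H.n) : ℕ := if H.treeDir v then 1 else 2

lemma delta_cases (v : Fin H.n) : H.delta v = 1 ∨ H.delta v = 2 := by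
  unfold delta; split <;> simp

/-- the interior color (mod 3) of a vertex -/
noncomputable def col (v : Fin H.n) : ℕ :=
  ((Finset.range (H.depth v)).sum fun j => H.delta (H.parent^[j] v)) % 3

lemma col_lt (v : Fin H.n) : H.col v < 3 := Nat.mod_lt _ (by norm_num)

lemma col_parent {v : Fin H.n} (hv : v ≠ H.root) :
    H.col v = (H.delta v + H.col (H.parent v)) % 3 := by
  have hd := H.depth_parent hv
  unfold col
  rw [hd, Finset.sum_range_succ']
  simp only [Function.iterate_succ_apply, Function.iterate_zero_apply]
  omega

/-- the natural-number value of the coloring -/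
noncomputable def cval (v : Fin H.n) : ℕ :=
  if h : ∃ i, H.leaf i = v then h.choose.val else 5 + H.col v

lemma cval_leaf (i : Fin H.m) : H.cval (H.leaf i) = i.val := by
  have h : ∃ j, H.leaf j = H.leaf i := ⟨i, rfl⟩
  rw [cval, dif_pos h, H.leaf_inj h.choose_spec]

lemma cval_of_not_leaf {v : Fin H.n} (h : ¬ ∃ i, H.leaf i = v) :
    H.cval v = 5 + H.col v := dif_neg h

lemma cval_lt_of_leaf (hm : H.m ≤ 5) {v : Fin H.n} (h : ∃ i, H.leaf i = v) :
    H.cval v < 5 := by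
  obtain ⟨i, hi⟩ := h
  rw [← hi, H.cval_leaf]
  exact lt_of_lt_of_le i.isLt hm

lemma five_le_cval {v : Fin H.n} (h : ¬ ∃ i, H.leaf i = v) : 5 ≤ H.cval v := by
  rw [H.cval_of_not_leaf h]; omega

lemma cval_lt8 (hm : H.m ≤ 5) (v : Fin H.n) : H.cval v < 8 := by
  by_cases h : ∃ i, H.leaf i = v
  · exact lt_trans (H.cval_lt_of_leaf hm h) (by norm_num)
  · rw [H.cval_of_not_leaf h]
    have := H.col_lt v
    omega

lemma leaf_iff_of_cval_eq (hm : H.m ≤ 5) {a b : Fin H.n} (h : H.cval a = H.cval b) :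
    (∃ i, H.leaf i = a) ↔ (∃ i, H.leaf i = b) := by
  constructor <;> intro hl <;> by_contra hc
  · have := H.five_le_cval hc; have := H.cval_lt_of_leaf hm hl; omega
  · have := H.five_le_cval hc; have := H.cval_lt_of_leaf hm hl; omega

lemma leaf_eq_of_cval_eq {a b : Fin H.n} (ha : ∃ i, H.leaf i = a)
    (hb : ∃ i, H.leaf i = b) (h : H.cval a = H.cval b) : a = b := by
  obtain ⟨i, hi⟩ := ha
  obtain ⟨j, hj⟩ := hb
  subst hi; subst hj
  rw [H.cval_leaf, H.cval_leaf] at h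
  exact congrArg H.leaf (Fin.ext h)

lemma arc_col {a b : Fin H.n} (h : H.arc a b) (ha : ¬ ∃ i, H.leaf i = a)
    (hb : ¬ ∃ i, H.leaf i = b) : H.col b = (1 + H.col a) % 3 := by
  rcases h with ⟨hb', ha', hd⟩ | ⟨ha', hb', hd⟩ | ⟨i, ⟨_, hu, hv⟩ | ⟨_, hv, hu⟩⟩
  · subst ha'
    have := H.col_parent hb'
    rw [delta, hd] at this
    simp only [if_true] at this
    omega
  · subst hb'
    have := H.col_parent ha'
    rw [delta, hd] at this
    simp only [Bool.false_eq_true, if_false] at this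
    have h2 := H.col_lt (H.parent a)
    omega
  · exact absurd ⟨i, hu.symm⟩ ha
  · exact absurd ⟨H.next i, hu.symm⟩ ha

lemma cyc_of_leaf_arc {a b : Fin H.n} (h : H.arc a b) (ha : ∃ i, H.leaf i = a)
    (hb : ∃ i, H.leaf i = b) :
    ∃ i : Fin H.m,
      (H.cycDir i = true ∧ a = H.leaf i ∧ b = H.leaf (H.next i)) ∨
      (H.cycDir i = false ∧ b = H.leaf i ∧ a = H.leaf (H.next i)) := by
  rcases h with ⟨hb', ha', _⟩ | ⟨ha', hb', _⟩ | h3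
  · exact absurd (ha' ▸ ha) (H.parent_not_leaf hb')
  · exact absurd (hb' ▸ hb) (H.parent_not_leaf ha')
  · exact h3

lemma next_ne (i : Fin H.m) : H.next i ≠ i := by
  intro h
  have hv : (i.val + 1) % H.m = i.val := congrArg Fin.val h
  have h3 := H.three_le
  have hi := i.isLt
  rcases Nat.lt_or_ge (i.val + 1) H.m with hlt | hge
  · rw [Nat.mod_eq_of_lt hlt] at hv; omega
  · have he : i.val + 1 = H.m := by omega
    rw [he, Nat.mod_self] at hv
    omega

lemma next_next_ne (i : Fin H.m) : H.next (H.next i) ≠ i := by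
  intro h
  have hv : ((i.val + 1) % H.m + 1) % H.m = i.val := congrArg Fin.val h
  have h3 := H.three_le
  have hi := i.isLt
  rcases Nat.lt_or_ge (i.val + 1) H.m with hlt | hge
  · rw [Nat.mod_eq_of_lt hlt] at hv
    rcases Nat.lt_or_ge (i.val + 2) H.m with hlt2 | hge2
    · rw [Nat.mod_eq_of_lt hlt2] at hv; omega
    · have he : i.val + 1 + 1 = H.m := by omega
      rw [he, Nat.mod_self] at hv
      omega
  · have he : i.val + 1 = H.m := by omega
    rw [he, Nat.mod_self, Nat.mod_eq_of_lt (by omega : (0:ℕ) + 1 < H.m)] at hv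
    omega

lemma proper (hm : H.m ≤ 5) {u v : Fin H.n} (h : H.arc u v) :
    H.cval u ≠ H.cval v := by
  rcases h with ⟨hv, hu, hd⟩ | ⟨hu, hv, hd⟩ | ⟨i, ⟨_, hu, hv⟩ | ⟨_, hv, hu⟩⟩
  · subst hu
    have hpl := H.parent_not_leaf hv
    by_cases hl : ∃ i, H.leaf i = v
    · have h1 := H.cval_lt_of_leaf hm hl
      have h2 := H.five_le_cval hpl
      omega
    · rw [H.cval_of_not_leaf hpl, H.cval_of_not_leaf hl]
      have h1 := H.col_parent hv
      have h2 := H.col_lt (H.parent v)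
      rcases H.delta_cases v with h3 | h3 <;> omega
  · subst hv
    have hpl := H.parent_not_leaf hu
    by_cases hl : ∃ i, H.leaf i = u
    · have h1 := H.cval_lt_of_leaf hm hl
      have h2 := H.five_le_cval hpl
      omega
    · rw [H.cval_of_not_leaf hpl, H.cval_of_not_leaf hl]
      have h1 := H.col_parent hu
      have h2 := H.col_lt (H.parent u)
      rcases H.delta_cases u with h3 | h3 <;> omega
  · subst hu; subst hv
    rw [H.cval_leaf, H.cval_leaf]
    intro h
    exact H.next_ne i (Fin.ext h.symm)
  · subst hu; subst hv
    rw [H.cval_leaf, H.cval_leaf]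
    intro h
    exact H.next_ne i (Fin.ext h)

lemma oriented (hm : H.m ≤ 5) {t u v w : Fin H.n} (h1 : H.arc t u) (h2 : H.arc v w)
    (e1 : H.cval t = H.cval w) (e2 : H.cval u = H.cval v) : False := by
  by_cases ht : ∃ i, H.leaf i = t
  · have hw : ∃ i, H.leaf i = w := (H.leaf_iff_of_cval_eq hm e1).1 ht
    by_cases hu : ∃ i, H.leaf i = u
    · -- all four are leaves: both arcs are cycle arcs
      have hv : ∃ i, H.leaf i = v := (H.leaf_iff_of_cval_eq hm e2).1 hu
      have htw : t = w := H.leaf_eq_of_cval_eq ht hw e1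
      have huv : u = v := H.leaf_eq_of_cval_eq hu hv e2
      subst htw; subst huv
      obtain ⟨i, hc1⟩ := H.cyc_of_leaf_arc h1 ht hu
      obtain ⟨j, hc2⟩ := H.cyc_of_leaf_arc h2 hu ht
      rcases hc1 with ⟨d1, ha1, hb1⟩ | ⟨d1, ha1, hb1⟩ <;>
        rcases hc2 with ⟨d2, ha2, hb2⟩ | ⟨d2, ha2, hb2⟩
      · -- t = leaf i, u = leaf (next i), u = leaf j, t = leaf (next j)
        have hji : j = H.next i := H.leaf_inj (ha2.symm.trans hb1)
        have hij : i = H.next j := H.leaf_inj (ha1.symm.trans hb2)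
        exact H.next_next_ne i (by rw [← hji, ← hij])
      · -- u = leaf (next i) and u = leaf (next j), t = leaf i, t = leaf j
        have hij : i = j := H.leaf_inj (ha1.symm.trans ha2)
        rw [hij] at d1
        rw [d1] at d2
        simp at d2
      · have hij : i = j := H.leaf_inj (ha1.symm.trans ha2)
        rw [hij] at d1
        rw [d1] at d2
        simp at d2
      · have hji : j = H.next i := H.leaf_inj (ha2.symm.trans hb1)
        have hij : i = H.next j := H.leaf_inj (ha1.symm.trans hb2)
        exact H.next_next_ne i (by rw [← hji, ← hij])
    · -- t leaf, u not leaf, v not leaf, w leaf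
      have hv : ¬ ∃ i, H.leaf i = v := fun h => hu ((H.leaf_iff_of_cval_eq hm e2).2 h)
      -- arc t → u with t leaf: must be the second tree case
      have htw : t = w := H.leaf_eq_of_cval_eq ht hw e1
      rcases h1 with ⟨hu', ht', _⟩ | ⟨ht', hu', hd1⟩ | ⟨i, ⟨_, hti, hui⟩ | ⟨_, hui, hti⟩⟩
      · exact H.parent_not_leaf hu' (ht' ▸ ht)
      · rcases h2 with ⟨hw', hv', hd2⟩ | ⟨hv', hw', _⟩ | ⟨j, ⟨_, hvj, _⟩ | ⟨_, _, hvj⟩⟩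
        · rw [← htw] at hd2
          rw [hd1] at hd2
          exact Bool.false_ne_true hd2
        · exact H.parent_not_leaf hv' (hw' ▸ hw)
        · exact hv ⟨j, hvj.symm⟩
        · exact hv ⟨H.next j, hvj.symm⟩
      · exact hu ⟨H.next i, hui.symm⟩
      · exact hu ⟨i, hui.symm⟩
  · have hw : ¬ ∃ i, H.leaf i = w := fun h => ht ((H.leaf_iff_of_cval_eq hm e1).2 h)
    by_cases hu : ∃ i, H.leaf i = u
    · -- t not leaf, u leaf, v leaf, w not leaf
      have hv : ∃ i, H.leaf i = v := (H.leaf_iff_of_cval_eq hm e2).1 hu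
      have huv : u = v := H.leaf_eq_of_cval_eq hu hv e2
      rcases h1 with ⟨hu', ht', hd1⟩ | ⟨ht', hu', _⟩ | ⟨i, ⟨_, hti, hui⟩ | ⟨_, hui, hti⟩⟩
      · rcases h2 with ⟨hw', hv', _⟩ | ⟨hv', hw', hd2⟩ | ⟨j, ⟨_, _, hwj⟩ | ⟨_, hwj, _⟩⟩
        · exact H.parent_not_leaf hw' (hv' ▸ hv)
        · rw [← huv] at hd2
          rw [hd1] at hd2
          exact Bool.false_ne_true hd2.symm
        · exact hw ⟨H.next j, hwj.symm⟩
        · exact hw ⟨j, hwj.symm⟩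
      · exact H.parent_not_leaf ht' (hu' ▸ hu)
      · exact ht ⟨i, hti.symm⟩
      · exact ht ⟨H.next i, hti.symm⟩
    · -- all four interior
      have hv : ¬ ∃ i, H.leaf i = v := fun h => hu ((H.leaf_iff_of_cval_eq hm e2).2 h)
      have c1 := H.arc_col h1 ht hu
      have c2 := H.arc_col h2 hv hw
      rw [H.cval_of_not_leaf ht, H.cval_of_not_leaf hw] at e1
      rw [H.cval_of_not_leaf hu, H.cval_of_not_leaf hv] at e2
      have l1 := H.col_lt t
      have l2 := H.col_lt u
      have l3 := H.col_lt v
      have l4 := H.col_lt w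
      omega

end OrientedHalin

/-- Every oriented Halin graph whose exterior cycle has at most 5 vertices admits an
oriented coloring with at most 8 colors, in which the exterior vertices (the leaves)
get pairwise distinct colors from a set of at most 5 colors (the colors `0,…,4`) and
the interior vertices are colored with 3 additional colors (the colors `5,6,7`). -/
theorem orientedHalin_small_cycle_coloring (H : OrientedHalin) (hm : H.m ≤ 5) :
    ∃ β : Fin H.n → Fin 8,
      (∀ u v, H.arc u v → β u ≠ β v) ∧
      (∀ t u v w, H.arc t u → H.arc v w → β t ≠ β w ∨ β u ≠ β v) ∧
      (Function.Injective fun i : Fin H.m => β (H.leaf i)) ∧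
      (∀ i : Fin H.m, (β (H.leaf i)).val < 5) ∧
      (∀ v : Fin H.n, (∀ i : Fin H.m, H.leaf i ≠ v) → 5 ≤ (β v).val) := by
  refine ⟨fun v => ⟨H.cval v, H.cval_lt8 hm v⟩, ?_, ?_, ?_, ?_, ?_⟩
  · intro u v h hEq
    exact H.proper hm h (congrArg Fin.val hEq)
  · intro t u v w h1 h2
    by_contra hc
    push_neg at hc
    exact H.oriented hm h1 h2 (congrArg Fin.val hc.1) (congrArg Fin.val hc.2)
  · intro i j h
    have hv : H.cval (H.leaf i) = H.cval (H.leaf j) := congrArg Fin.val h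
    rw [H.cval_leaf, H.cval_leaf] at hv
    exact Fin.ext hv
  · intro i
    show H.cval (H.leaf i) < 5
    rw [H.cval_leaf]
    exact lt_of_lt_of_le i.isLt hm
  · intro v hv
    show 5 ≤ H.cval v
    exact H.five_le_cval (fun ⟨i, hi⟩ => hv i hi)
end

section
/- Every directed cycle of length at least 3 in which all arcs are oriented in the same direction around the cycle admits an oriented coloring with at most 5 colors. -/
/-- Every directed cycle of length `n ≥ 3` in which all arcs are oriented in the same
direction around the cycle (vertices `ZMod n`, with an arc from `i` to `i+1` for every
`i`) admits an oriented coloring with at most 5 colors: a map `β` to 5 colors such that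
(1) the two ends of every arc get different colors, and (2) for every two arcs
`(i, i+1)` and `(j, j+1)`, either `β i ≠ β (j+1)` or `β (i+1) ≠ β j`. -/
theorem directed_cycle_coloring_five (n : ℕ) (hn : 3 ≤ n) :
    ∃ β : ZMod n → Fin 5,
      (∀ i : ZMod n, β i ≠ β (i + 1)) ∧
      (∀ i j : ZMod n, β i ≠ β (j + 1) ∨ β (i + 1) ≠ β j) := by
  haveI : NeZero n := ⟨by omega⟩
  set b : ℕ := (5 - n % 5) % 5 with hb
  have hb1 : b ≤ n - 1 := by omega
  have hnb : (n + b) % 5 = 0 := by omega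
  set β : ZMod n → ZMod 5 := fun i => ((i.val + min i.val b : ℕ) : ZMod 5) with hβ
  have hval1 : (1 : ZMod n).val = 1 := by
    haveI : Fact (1 < n) := ⟨by omega⟩
    exact ZMod.val_one n
  have key : ∀ i : ZMod n, β (i + 1) = β i + 1 ∨ β (i + 1) = β i + 2 := by
    intro i
    have hv : (i + 1).val = (i.val + 1) % n := by rw [ZMod.val_add, hval1]
    have hlt : i.val < n := ZMod.val_lt i
    rcases Nat.lt_or_ge (i.val + 1) n with h | h
    · rw [Nat.mod_eq_of_lt h] at hv
      rcases Nat.lt_or_ge i.val b with hc | hc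
      · right
        rw [hβ]
        simp only [hv]
        rw [show ((2 : ZMod 5)) = ((2 : ℕ) : ZMod 5) by norm_num, ← Nat.cast_add,
          ZMod.natCast_eq_natCast_iff]
        unfold Nat.ModEq
        omega
      · left
        rw [hβ]
        simp only [hv]
        rw [show ((1 : ZMod 5)) = ((1 : ℕ) : ZMod 5) by norm_num, ← Nat.cast_add,
          ZMod.natCast_eq_natCast_iff]
        unfold Nat.ModEq
        omega
    · -- wrap-around: i.val = n - 1, (i+1).val = 0
      have hin : i.val = n - 1 := by omega
      have hsum : i.val + 1 = n := by omega
      rw [hsum, Nat.mod_self] at hv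
      left
      rw [hβ]
      simp only [hv, hin]
      rw [show ((1 : ZMod 5)) = ((1 : ℕ) : ZMod 5) by norm_num, ← Nat.cast_add,
        ZMod.natCast_eq_natCast_iff]
      unfold Nat.ModEq
      omega
  refine ⟨β, ?_, ?_⟩
  · intro i (h : β i = β (i + 1))
    rcases key i with hk | hk <;> rw [hk, left_eq_add] at h <;>
      exact absurd h (by decide)
  · intro i j
    by_contra hcon
    push_neg at hcon
    obtain ⟨h1, h2⟩ := hcon
    rcases key i with hi | hi <;> rcases key j with hj | hj <;>
      rw [hi] at h2 <;> rw [hj] at h1 <;>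
      · rw [h1, add_assoc] at h2
        nth_rewrite 2 [← add_zero (β j)] at h2
        have h4 := add_left_cancel (G := ZMod 5) h2
        revert h4; decide
end
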